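/- Let (ψ_k)_{k∈ℕ} be a Hilbert basis of L²([a,b]) with P_K the orthogonal projection onto span{ψ_0,…,ψ_K}. Let F, g_0, …, g_J ∈ L²([a,b]), define G^K with entries (G^K)_{k,j} = ⟨g_j, ψ_k⟩ for 0 ≤ k ≤ K, and define M_K(w) = ‖P_K(F − Σ_{j=0}^J w_j g_j)‖² and M_∞(w) = ‖F − Σ_{j=0}^J w_j g_j‖² on ℝ^{J+1}. Suppose G^{K₀} is injective for some K₀ (so that for each K ≥ K₀ the objective M_K has a unique minimizer w^K ∈ ℝ^{J+1}, and M_∞ has a unique minimizer w^∞ ∈ ℝ^{J+1}). Then w^K converges to w^∞ in ℝ^{J+1} as K → ∞. -/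

import Mathlib

set_option autoImplicit false

open MeasureTheory Set Matrix

/-!
The objectives `M_K` increase with `K` to `M_∞`, and the sublevel sets of `M_{K₀}` are compact
because `w ↦ P_{K₀} (Σ_j w_j g_j)` is injective (its coordinates against `ψ_0, …, ψ_{K₀}` are
`G^{K₀} w`). For `K ≥ K₀` the minimizer `w^K` lies in the sublevel set
`{M_{K₀} ≤ M_∞(w^∞)}`, since `M_{K₀}(w^K) ≤ M_K(w^K) ≤ M_K(w^∞) ≤ M_∞(w^∞)`. The same chain
shows that every cluster point `w̄` of `(w^K)` satisfies `M_{K'}(w̄) ≤ M_∞(w^∞)` for all `K'`,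
hence `M_∞(w̄) ≤ M_∞(w^∞)` and `w̄ = w^∞`.
-/

open Filter Topology

theorem tendsto_minimizer_of_monotone_of_tendsto {X : Type*} [TopologicalSpace X]
    {M : ℕ → X → ℝ} {Mlim : X → ℝ} {x : ℕ → X} {xlim : X} {K₀ : ℕ}
    (hmono : ∀ y, Monotone (M · y)) (hlsc : ∀ K, LowerSemicontinuous (M K))
    (hlim : ∀ y, Tendsto (M · y) atTop (𝓝 (Mlim y)))
    (hcompact : IsCompact {y | M K₀ y ≤ Mlim xlim})
    (hmin : ∀ K, K₀ ≤ K → ∀ y, M K (x K) ≤ M K y)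
    (huniq : ∀ y, Mlim y ≤ Mlim xlim → y = xlim) :
    Tendsto x atTop (𝓝 xlim) := by
  have hle : ∀ K', ∀ᶠ K in atTop, M K' (x K) ≤ Mlim xlim := fun K' =>
    (eventually_ge_atTop (max K' K₀)).mono fun K hK =>
      calc M K' (x K) ≤ M K (x K) := hmono _ (le_of_max_le_left hK)
        _ ≤ M K xlim := hmin K (le_of_max_le_right hK) xlim
        _ ≤ Mlim xlim := (hmono xlim).ge_of_tendsto (hlim xlim) K
  refine hcompact.tendsto_nhds_of_unique_mapClusterPt (hle K₀) fun y _ hy => huniq y ?_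
  exact le_of_tendsto' (hlim y) fun K' =>
    ((hlsc K').isClosed_preimage (Mlim xlim)).mem_of_mapClusterPt hy (hle K')

theorem LinearMap.isCompact_setOf_norm_sub_sq_le {V W : Type*} [NormedAddCommGroup V]
    [NormedSpace ℝ V] [FiniteDimensional ℝ V] [NormedAddCommGroup W] [NormedSpace ℝ W]
    {A : V →ₗ[ℝ] W} (hA : Function.Injective A) (y : W) (c : ℝ) :
    IsCompact {w | ‖y - A w‖ ^ 2 ≤ c} := by
  obtain ⟨C, -, hC⟩ := A.exists_antilipschitzWith (LinearMap.ker_eq_bot.mpr hA)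
  have hcont : Continuous A := A.continuous_of_finiteDimensional
  refine Metric.isCompact_of_isClosed_isBounded (isClosed_le (by fun_prop) continuous_const)
    ((hC.isBounded_preimage (Metric.isBounded_closedBall (x := y) (r := √c))).subset ?_)
  intro w hw
  rw [mem_preimage, Metric.mem_closedBall, dist_eq_norm']
  exact Real.le_sqrt_of_sq_le hw

instance {𝕜 E : Type*} [DivisionRing 𝕜] [AddCommGroup E] [Module 𝕜 E] (ψ : ℕ → E) (K : ℕ) :
    FiniteDimensional 𝕜 (Submodule.span 𝕜 (ψ '' Iic K)) :=
  FiniteDimensional.span_of_finite 𝕜 ((finite_Iic K).image ψ)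

theorem monotone_span_image_Iic {R E : Type*} [Semiring R] [AddCommMonoid E] [Module R E]
    (ψ : ℕ → E) : Monotone fun K => Submodule.span R (ψ '' Iic K) :=
  fun _ _ h => Submodule.span_mono (image_mono (Iic_subset_Iic.2 h))

section InnerProductSpace

variable {𝕜 E : Type*} [RCLike 𝕜] [NormedAddCommGroup E] [InnerProductSpace 𝕜 E]

theorem Submodule.norm_starProjection_le_of_le {U V : Submodule 𝕜 E} [U.HasOrthogonalProjection]
    [V.HasOrthogonalProjection] (h : U ≤ V) (x : E) :
    ‖U.starProjection x‖ ≤ ‖V.starProjection x‖ := by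
  rw [← starProjection_comp_starProjection_of_le h, ContinuousLinearMap.comp_apply]
  exact U.norm_starProjection_apply_le _

theorem Submodule.inner_starProjection_of_mem {U : Submodule 𝕜 E} [U.HasOrthogonalProjection]
    {y : E} (hy : y ∈ U) (x : E) : inner 𝕜 (U.starProjection x) y = inner 𝕜 x y := by
  rw [inner_starProjection_left_eq_right, starProjection_eq_self_iff.mpr hy]

theorem tendsto_starProjection_span_image_Iic {ψ : ℕ → E}
    (hψ : (Submodule.span 𝕜 (range ψ)).topologicalClosure = ⊤) (x : E) :
    Tendsto (fun K => (Submodule.span 𝕜 (ψ '' Iic K)).starProjection x) atTop (𝓝 x) := by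
  refine Submodule.starProjection_tendsto_self _ (monotone_span_image_Iic ψ) x ?_
  rw [Submodule.iSup_span, ← image_iUnion, iUnion_Iic, image_univ, hψ]

end InnerProductSpace

theorem injective_starProjection_comp_linearCombination {E ι κ : Type*} [NormedAddCommGroup E]
    [InnerProductSpace ℝ E] [Fintype ι] [Fintype κ] {U : Submodule ℝ E}
    [U.HasOrthogonalProjection] {ψ : κ → E} (hψ : ∀ k, ψ k ∈ U) (g : ι → E)
    (hinj : Function.Injective fun w => (Matrix.of fun k j => (inner ℝ (g j) (ψ k) : ℝ)) *ᵥ w) :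
    Function.Injective (U.starProjection ∘ Fintype.linearCombination ℝ g) := by
  have hcoord : ∀ w k, ((Matrix.of fun k j => (inner ℝ (g j) (ψ k) : ℝ)) *ᵥ w) k =
      inner ℝ (U.starProjection (Fintype.linearCombination ℝ g w)) (ψ k) := by
    intro w k
    simp [mulVec, dotProduct, U.inner_starProjection_of_mem (hψ k),
      Fintype.linearCombination_apply, sum_inner, real_inner_smul_left, mul_comm]
  intro v w h
  refine hinj (funext fun k => ?_)
  dsimp only
  rw [hcoord, hcoord]
  exact congrArg (inner ℝ · (ψ k)) h

theorem weak_SINDy_coefficients_converge_general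
    (a b : ℝ) {J : ℕ}
    (ψ : ℕ → Lp ℝ 2 (volume.restrict (Icc a b)))
    (hcomplete : (Submodule.span ℝ (Set.range ψ)).topologicalClosure = ⊤)
    (F : Lp ℝ 2 (volume.restrict (Icc a b)))
    (g : Fin (J + 1) → Lp ℝ 2 (volume.restrict (Icc a b)))
    (P : ℕ → Lp ℝ 2 (volume.restrict (Icc a b)) → Lp ℝ 2 (volume.restrict (Icc a b)))
    (hPmem : ∀ K u, P K u ∈ Submodule.span ℝ (ψ '' Set.Iic K))
    (hPorth : ∀ K u, ∀ v ∈ Submodule.span ℝ (ψ '' Set.Iic K),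
      (inner ℝ (u - P K u) v : ℝ) = 0)
    (G : (K : ℕ) → Matrix (Fin (K + 1)) (Fin (J + 1)) ℝ)
    (hG : ∀ (K : ℕ) (k : Fin (K + 1)) (j : Fin (J + 1)),
      G K k j = (inner ℝ (g j) (ψ (k : ℕ)) : ℝ))
    (MK : ℕ → EuclideanSpace ℝ (Fin (J + 1)) → ℝ)
    (hMK : ∀ K w, MK K w = ‖P K (F - ∑ j, w j • g j)‖ ^ 2)
    (Minf : EuclideanSpace ℝ (Fin (J + 1)) → ℝ)
    (hMinf : ∀ w, Minf w = ‖F - ∑ j, w j • g j‖ ^ 2)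
    (K₀ : ℕ) (hinj : Function.Injective fun w => (G K₀).mulVec w)
    -- `w^K` is the unique minimizer of `M_K` for `K ≥ K₀`
    (wK : ℕ → EuclideanSpace ℝ (Fin (J + 1)))
    (hwKmin : ∀ K, K₀ ≤ K → ∀ v, MK K (wK K) ≤ MK K v)
    -- `w^∞` is the unique minimizer of `M_∞`
    (winf : EuclideanSpace ℝ (Fin (J + 1)))
    (hwinfmin : ∀ v, Minf winf ≤ Minf v)
    (hwinfuniq : ∀ v, Minf v = Minf winf → v = winf) :
    Filter.Tendsto wK Filter.atTop (nhds winf) := by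
  let S := fun K => Submodule.span ℝ (ψ '' Iic K)
  let T := Fintype.linearCombination ℝ g ∘ₗ (WithLp.linearEquiv 2 ℝ (Fin (J + 1) → ℝ)).toLinearMap
  have hT_cont : Continuous T := T.continuous_of_finiteDimensional
  have hMK' : MK = fun K w => ‖(S K).starProjection (F - T w)‖ ^ 2 := by
    ext K w
    rw [hMK, ← (S K).eq_starProjection_of_mem_of_inner_eq_zero (hPmem K _) (hPorth K _)]
    simp [T, Fintype.linearCombination_apply]
  have hMinf' : Minf = fun w => ‖F - T w‖ ^ 2 := by
    ext w
    simp [hMinf, T, Fintype.linearCombination_apply]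
  have hG₀ : G K₀ = Matrix.of fun (k : Fin (K₀ + 1)) j => inner ℝ (g j) (ψ k) := Matrix.ext (hG K₀)
  have hA : Function.Injective ((S K₀).starProjection.toLinearMap ∘ₗ T) :=
    (injective_starProjection_comp_linearCombination (U := S K₀)
      (fun k => Submodule.subset_span (mem_image_of_mem ψ (Nat.lt_succ_iff.mp k.isLt))) g
      (hG₀ ▸ hinj)).comp (WithLp.linearEquiv 2 ℝ (Fin (J + 1) → ℝ)).injective
  subst hMK' hMinf'
  have hmono : ∀ w, Monotone fun K => ‖(S K).starProjection (F - T w)‖ ^ 2 := fun w K K' h =>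
    pow_le_pow_left₀ (norm_nonneg _)
      (Submodule.norm_starProjection_le_of_le (monotone_span_image_Iic ψ h) _) 2
  have hcompact : IsCompact {w | ‖(S K₀).starProjection (F - T w)‖ ^ 2 ≤ ‖F - T winf‖ ^ 2} := by
    simpa only [map_sub, LinearMap.comp_apply, ContinuousLinearMap.coe_coe] using
      LinearMap.isCompact_setOf_norm_sub_sq_le hA ((S K₀).starProjection F) _
  exact tendsto_minimizer_of_monotone_of_tendsto hmono
    (fun K => Continuous.lowerSemicontinuous (by fun_prop))
    (fun w => (tendsto_starProjection_span_image_Iic hcomplete _).norm.pow 2) hcompact hwKmin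
    (fun v hv => hwinfuniq v (le_antisymm hv (hwinfmin v)))

/-- Proposition 3.14: With `(ψ_k)` a Hilbert basis of `L²([a,b])`,
`P K` the orthogonal projection onto `span{ψ_0,…,ψ_K}`, `F, g_0,…,g_J ∈ L²([a,b])`,
`(G^K)_{k,j} = ⟨g_j, ψ_k⟩`, `M_K(w) = ‖P_K(F − Σ_j w_j g_j)‖²` and
`M_∞(w) = ‖F − Σ_j w_j g_j‖²`, suppose `G^{K₀}` is injective, and for `K ≥ K₀` let
`w^K` be the unique minimizer of `M_K` and `w^∞` the unique minimizer of `M_∞`.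
Then `w^K → w^∞` in `ℝ^{J+1}` as `K → ∞`. -/
theorem weak_SINDy_coefficients_converge
    (a b : ℝ) (hab : a < b) {J : ℕ}
    (ψ : ℕ → Lp ℝ 2 (volume.restrict (Icc a b))) (hψ : Orthonormal ℝ ψ)
    (hcomplete : (Submodule.span ℝ (Set.range ψ)).topologicalClosure = ⊤)
    (F : Lp ℝ 2 (volume.restrict (Icc a b)))
    (g : Fin (J + 1) → Lp ℝ 2 (volume.restrict (Icc a b)))
    (P : ℕ → Lp ℝ 2 (volume.restrict (Icc a b)) → Lp ℝ 2 (volume.restrict (Icc a b)))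
    (hPmem : ∀ K u, P K u ∈ Submodule.span ℝ (ψ '' Set.Iic K))
    (hPorth : ∀ K u, ∀ v ∈ Submodule.span ℝ (ψ '' Set.Iic K),
      (inner ℝ (u - P K u) v : ℝ) = 0)
    (G : (K : ℕ) → Matrix (Fin (K + 1)) (Fin (J + 1)) ℝ)
    (hG : ∀ (K : ℕ) (k : Fin (K + 1)) (j : Fin (J + 1)),
      G K k j = (inner ℝ (g j) (ψ (k : ℕ)) : ℝ))
    (MK : ℕ → EuclideanSpace ℝ (Fin (J + 1)) → ℝ)
    (hMK : ∀ K w, MK K w = ‖P K (F - ∑ j, w j • g j)‖ ^ 2)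
    (Minf : EuclideanSpace ℝ (Fin (J + 1)) → ℝ)
    (hMinf : ∀ w, Minf w = ‖F - ∑ j, w j • g j‖ ^ 2)
    (K₀ : ℕ) (hinj : Function.Injective fun w => (G K₀).mulVec w)
    -- `w^K` is the unique minimizer of `M_K` for `K ≥ K₀`
    (wK : ℕ → EuclideanSpace ℝ (Fin (J + 1)))
    (hwKmin : ∀ K, K₀ ≤ K → ∀ v, MK K (wK K) ≤ MK K v)
    (hwKuniq : ∀ K, K₀ ≤ K → ∀ v, MK K v = MK K (wK K) → v = wK K)
    -- `w^∞` is the unique minimizer of `M_∞`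
    (winf : EuclideanSpace ℝ (Fin (J + 1)))
    (hwinfmin : ∀ v, Minf winf ≤ Minf v)
    (hwinfuniq : ∀ v, Minf v = Minf winf → v = winf) :
    Filter.Tendsto wK Filter.atTop (nhds winf) :=
  weak_SINDy_coefficients_converge_general a b ψ hcomplete F g P hPmem hPorth G hG MK hMK Minf hMinf
    K₀ hinj wK hwKmin winf hwinfmin hwinfuniq
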